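/- arXiv:1212.4694 — 2 statements merged into one kernel-verified Lean document; each statement's English description precedes it below -/
import Mathlib

section
/- Let a : ℝⁿ → ℝ be a C², ℤⁿ-periodic, nonnegative function. Then there exists a constant C > 0 such that |Da(x)|² ≤ C·a(x) for all x ∈ ℝⁿ. -/
open MeasureTheory Finset

noncomputable section

/-- Partial derivative of `f` at `x` in the `i`-th coordinate direction. -/
def pd {n : ℕ} (f : (Fin n → ℝ) → ℝ) (i : Fin n) (x : Fin n → ℝ) : ℝ :=
  fderiv ℝ f x (Pi.single i 1)

/-- Squared euclidean norm of the (spatial) gradient, `|Df(x)|²`. -/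
def gradSq {n : ℕ} (f : (Fin n → ℝ) → ℝ) (x : Fin n → ℝ) : ℝ :=
  ∑ i, (pd f i x) ^ 2

/-- Laplacian of `f` at `x`. -/
def lap {n : ℕ} (f : (Fin n → ℝ) → ℝ) (x : Fin n → ℝ) : ℝ :=
  ∑ i, pd (pd f i) i x

/-- Sum of squares of all second spatial derivatives, `|D²f(x)|²`. -/
def hessSq {n : ℕ} (f : (Fin n → ℝ) → ℝ) (x : Fin n → ℝ) : ℝ :=
  ∑ i, ∑ j, (pd (pd f i) j x) ^ 2

/-- `ℤⁿ`-periodicity of a function on `ℝⁿ`. -/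
def ZPer {n : ℕ} (f : (Fin n → ℝ) → ℝ) : Prop :=
  ∀ (x : Fin n → ℝ) (k : Fin n → ℤ), f (x + fun i => (k i : ℝ)) = f x

/-- `i`-th component of `D_pH(x,p)`. -/
def DpH {n : ℕ} (H : (Fin n → ℝ) → (Fin n → ℝ) → ℝ) (x p : Fin n → ℝ) (i : Fin n) : ℝ :=
  fderiv ℝ (fun q => H x q) p (Pi.single i 1)

/-- `i`-th component of `D_xH(x,p)`. -/
def DxH {n : ℕ} (H : (Fin n → ℝ) → (Fin n → ℝ) → ℝ) (x p : Fin n → ℝ) (i : Fin n) : ℝ :=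
  fderiv ℝ (fun y => H y p) x (Pi.single i 1)

/-- `(i,j)` entry of the Hessian in `p`, `D²_{pp}H(x,p)`. -/
def D2pH {n : ℕ} (H : (Fin n → ℝ) → (Fin n → ℝ) → ℝ) (x p : Fin n → ℝ) (i j : Fin n) : ℝ :=
  fderiv ℝ (fun q => DpH H x q i) p (Pi.single j 1)

/-- Spatial gradient of a time-dependent function. -/
def Dsp {n : ℕ} (w : (Fin n → ℝ) → ℝ → ℝ) (x : Fin n → ℝ) (t : ℝ) : Fin n → ℝ :=
  fun i => pd (fun y => w y t) i x

/-- The unit cube `Q = [0,1]ⁿ`, a fundamental domain for the torus `𝕋ⁿ`. -/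
def cube (n : ℕ) : Set (Fin n → ℝ) := Set.Icc 0 1

/-!
If `f ≥ 0` and `|f''| ≤ K` on `ℝ`, then the Taylor bound `0 ≤ f (x + t) ≤ f x + f' x * t + K * t ^ 2`
holds for every `t`, so the discriminant of this quadratic in `t` is nonpositive: `f' x ^ 2 ≤ 4 K f x`.
By periodicity and continuity `D²a` is bounded, and applying the one-dimensional inequality along
each coordinate line gives `|Da|² ≤ C a`.
-/

section OneDimensional

variable {f f' f'' : ℝ → ℝ} {K : ℝ}

lemma abs_taylor_remainder_le (hf : ∀ t, HasDerivAt f (f' t) t)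
    (hf' : ∀ t, HasDerivAt f' (f'' t) t) (hbd : ∀ t, |f'' t| ≤ K) (x y : ℝ) :
    |f y - f x - f' x * (y - x)| ≤ K * (y - x) ^ 2 := by
  have hK : 0 ≤ K := (abs_nonneg _).trans (hbd 0)
  have hf'_lip : ∀ s, |f' s - f' x| ≤ K * |s - x| := fun s => by
    simpa only [Real.norm_eq_abs] using
      convex_univ.norm_image_sub_le_of_norm_hasDerivWithin_le
        (fun t _ => (hf' t).hasDerivWithinAt) (fun t _ => hbd t) (Set.mem_univ x) (Set.mem_univ s)
  have hg : ∀ s, HasDerivAt (fun s => f s - f' x * (s - x)) (f' s - f' x) s := fun s =>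
    ((hf s).sub (((hasDerivAt_id' s).sub_const x).const_mul (f' x))).congr_deriv (by ring)
  have hg_bd : ∀ s ∈ Set.uIcc x y, ‖f' s - f' x‖ ≤ K * |y - x| := fun s hs =>
    (hf'_lip s).trans (mul_le_mul_of_nonneg_left (Set.abs_sub_left_of_mem_uIcc hs) hK)
  have hmvt := (convex_uIcc x y).norm_image_sub_le_of_norm_hasDerivWithin_le
    (fun s _ => (hg s).hasDerivWithinAt) hg_bd Set.left_mem_uIcc Set.right_mem_uIcc
  simp only [Real.norm_eq_abs, sub_self, mul_zero, sub_zero] at hmvt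
  rw [mul_assoc, abs_mul_abs_self, ← sq] at hmvt
  convert hmvt using 2
  ring

lemma sq_deriv_le_of_nonneg (hf : ∀ t, HasDerivAt f (f' t) t)
    (hf' : ∀ t, HasDerivAt f' (f'' t) t) (hbd : ∀ t, |f'' t| ≤ K) (hnn : ∀ t, 0 ≤ f t)
    (x : ℝ) : f' x ^ 2 ≤ 4 * K * f x := by
  have h := discrim_le_zero (a := K) (b := f' x) (c := f x) fun t => by
    have := (abs_le.mp (abs_taylor_remainder_le hf hf' hbd x (x + t))).2
    rw [add_sub_cancel_left, sq] at this
    linarith [hnn (x + t)]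
  rw [discrim] at h
  linarith

end OneDimensional

lemma sq_fderiv_apply_le {E : Type*} [NormedAddCommGroup E] [NormedSpace ℝ E] {f : E → ℝ}
    {M : ℝ} (hf : ContDiff ℝ 2 f) (hnn : ∀ x, 0 ≤ f x)
    (hM : ∀ x, ‖fderiv ℝ (fderiv ℝ f) x‖ ≤ M) (x v : E) :
    fderiv ℝ f x v ^ 2 ≤ 4 * (M * ‖v‖ ^ 2) * f x := by
  have hf₁ : Differentiable ℝ f := hf.differentiable (by norm_num)
  have hf₂ : Differentiable ℝ (fderiv ℝ f) :=
    (hf.fderiv_right (m := 1) (by norm_num)).differentiable one_ne_zero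
  have hline : ∀ t : ℝ, HasDerivAt (fun t : ℝ => x + t • v) v t := fun t => by
    simpa using ((hasDerivAt_id t).smul_const v).const_add x
  have hd₁ : ∀ t : ℝ, HasDerivAt (fun t => f (x + t • v)) (fderiv ℝ f (x + t • v) v) t :=
    fun t => (hf₁ _).hasFDerivAt.comp_hasDerivAt t (hline t)
  have hd₂ : ∀ t : ℝ, HasDerivAt (fun t => fderiv ℝ f (x + t • v) v)
      (fderiv ℝ (fderiv ℝ f) (x + t • v) v v) t := fun t =>
    ((ContinuousLinearMap.apply ℝ ℝ v).hasFDerivAt.comp _ (hf₂ _).hasFDerivAt).comp_hasDerivAt t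
      (hline t)
  have hbd : ∀ t : ℝ, |fderiv ℝ (fderiv ℝ f) (x + t • v) v v| ≤ M * ‖v‖ ^ 2 := fun t =>
    calc |fderiv ℝ (fderiv ℝ f) (x + t • v) v v|
        ≤ ‖fderiv ℝ (fderiv ℝ f) (x + t • v)‖ * ‖v‖ * ‖v‖ := by
          rw [← Real.norm_eq_abs]
          exact ContinuousLinearMap.le_opNorm₂ _ v v
      _ ≤ M * ‖v‖ ^ 2 := by
          rw [mul_assoc, ← sq]
          exact mul_le_mul_of_nonneg_right (hM _) (by positivity)
  simpa using sq_deriv_le_of_nonneg hd₁ hd₂ hbd (fun t => hnn _) 0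

lemma fderiv_add_right_of_periodic {E F : Type*} [NormedAddCommGroup E] [NormedSpace ℝ E]
    [NormedAddCommGroup F] [NormedSpace ℝ F] {f : E → F} {c : E} (h : ∀ x, f (x + c) = f x)
    (x : E) : fderiv ℝ f (x + c) = fderiv ℝ f x := by
  rw [← fderiv_comp_add_right, funext h]

lemma exists_norm_le_of_periodic {n : ℕ} {F : Type*} [SeminormedAddCommGroup F]
    {g : (Fin n → ℝ) → F} (hg : Continuous g)
    (hper : ∀ x (k : Fin n → ℤ), g (x + fun i => (k i : ℝ)) = g x) : ∃ M, ∀ x, ‖g x‖ ≤ M := by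
  obtain ⟨M, hM⟩ := (isCompact_Icc : IsCompact (cube n)).exists_bound_of_continuousOn
    hg.continuousOn
  refine ⟨M, fun x => ?_⟩
  have hfract : (x + fun i => ((-⌊x i⌋ : ℤ) : ℝ)) ∈ cube n := by
    constructor <;> intro i <;> simp only [Pi.add_apply, Pi.zero_apply, Pi.one_apply, Int.cast_neg,
      ← sub_eq_add_neg, Int.self_sub_floor]
    exacts [Int.fract_nonneg _, (Int.fract_lt_one _).le]
  rw [← hper x]
  exact hM _ hfract

theorem stmt_0 {n : ℕ} (a : (Fin n → ℝ) → ℝ)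
    (ha : ContDiff ℝ 2 a) (haper : ZPer a) (hann : ∀ x, 0 ≤ a x) :
    ∃ C > 0, ∀ x, gradSq a x ≤ C * a x := by
  have hper : ∀ x (k : Fin n → ℤ),
      fderiv ℝ (fderiv ℝ a) (x + fun i => (k i : ℝ)) = fderiv ℝ (fderiv ℝ a) x := fun x k =>
    fderiv_add_right_of_periodic (fderiv_add_right_of_periodic (fun y => haper y k)) x
  obtain ⟨M, hM⟩ := exists_norm_le_of_periodic
    ((ha.fderiv_right (m := 1) (by norm_num)).continuous_fderiv one_ne_zero) hper
  have hM0 : 0 ≤ M := (norm_nonneg _).trans (hM 0)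
  have hpd : ∀ x i, pd a i x ^ 2 ≤ 4 * M * a x := fun x i => by
    simpa [pd, Pi.norm_single] using sq_fderiv_apply_le ha hann hM x (Pi.single i 1)
  refine ⟨4 * M * n + 1, by positivity, fun x => ?_⟩
  calc gradSq a x ≤ ∑ _i : Fin n, 4 * M * a x := sum_le_sum fun i _ => hpd x i
    _ = 4 * M * n * a x := by simp only [sum_const, card_univ, Fintype.card_fin, nsmul_eq_mul]; ring
    _ ≤ (4 * M * n + 1) * a x := by linarith [hann x]

end
end

section
/- Let A : ℝⁿ → Matₙ(ℝ) be a C², ℤⁿ-periodic map taking values in symmetric positive semidefinite n×n matrices. Then there exists a constant C > 0, depending only on n and the sup-norm of the second derivatives of A, such that for every x ∈ ℝⁿ, every 1 ≤ k ≤ n, and every symmetric n×n matrix S, one has (tr(∂_{x_k}A(x)·S))² ≤ C·tr(S·A(x)·S). -/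
open MeasureTheory Finset

noncomputable section

/-!
For a unit vector `ξ`, the function `g t = ξ ⬝ᵥ A (x + t • eₖ) *ᵥ ξ` is nonnegative and, by
periodicity, its second derivative is bounded by some `M`. Then `g t ≤ g 0 + g' 0 * t + M * t ^ 2`
for all `t`, and nonnegativity of this quadratic forces `g' 0 ^ 2 ≤ 4 * M * g 0`. Writing `S` in an
orthonormal eigenbasis `(u m)` with eigenvalues `λ m`, `tr (∂ₖA * S) = ∑ λ m * (u m ⬝ᵥ ∂ₖA *ᵥ u m)`
and `tr (S * A * S) = ∑ λ m ^ 2 * (u m ⬝ᵥ A *ᵥ u m)`, and Cauchy–Schwarz over `m` concludes.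
-/

open Matrix

def pdMatrix {n : ℕ} {ι : Type*} (A : (Fin n → ℝ) → Matrix ι ι ℝ) (k : Fin n)
    (x : Fin n → ℝ) : Matrix ι ι ℝ :=
  Matrix.of fun i j => pd (fun y => A y i j) k x

theorem abs_sub_sub_mul_le_of_abs_deriv2_le {g g' g'' : ℝ → ℝ} {M : ℝ}
    (hg : ∀ t, HasDerivAt g (g' t) t) (hg' : ∀ t, HasDerivAt g' (g'' t) t)
    (hM : ∀ t, |g'' t| ≤ M) (a b : ℝ) :
    |g b - g a - g' a * (b - a)| ≤ M * (b - a) ^ 2 := by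
  have hlip : ∀ t, |g' t - g' a| ≤ M * |t - a| := fun t => by
    simpa using Convex.norm_image_sub_le_of_norm_hasDerivWithin_le
      (fun x _ => (hg' x).hasDerivWithinAt) (fun x _ => hM x) convex_univ
      (Set.mem_univ a) (Set.mem_univ t)
  have key := Convex.norm_image_sub_le_of_norm_hasDerivWithin_le
    (f := fun t => g t - g' a * t) (C := M * |b - a|)
    (fun t _ => ((hg t).sub ((hasDerivAt_id t).const_mul (g' a))).hasDerivWithinAt)
    (fun t ht => by
      simpa using (hlip t).trans
        (mul_le_mul_of_nonneg_left (Set.abs_sub_left_of_mem_uIcc ht) ((abs_nonneg _).trans (hM t))))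
    (convex_uIcc a b) Set.left_mem_uIcc Set.right_mem_uIcc
  rw [Real.norm_eq_abs, Real.norm_eq_abs, mul_assoc, abs_mul_abs_self, ← sq] at key
  convert key using 2
  ring

theorem sq_deriv_le_of_nonneg_of_abs_deriv2_le {g g' g'' : ℝ → ℝ} {M : ℝ}
    (hg0 : ∀ t, 0 ≤ g t) (hg : ∀ t, HasDerivAt g (g' t) t)
    (hg' : ∀ t, HasDerivAt g' (g'' t) t) (hM : ∀ t, |g'' t| ≤ M) (a : ℝ) :
    g' a ^ 2 ≤ 4 * M * g a := by
  have h := discrim_le_zero (a := M) (b := g' a) (c := g a) fun s => by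
    have htaylor := (abs_le.1 (abs_sub_sub_mul_le_of_abs_deriv2_le hg hg' hM a (a + s))).2
    rw [add_sub_cancel_left] at htaylor
    nlinarith [hg0 (a + s)]
  rw [discrim] at h
  linarith

theorem ContDiff.pd {n : ℕ} {f : (Fin n → ℝ) → ℝ} {m N : WithTop ℕ∞} (hf : ContDiff ℝ N f)
    (hmN : m + 1 ≤ N) (i : Fin n) : ContDiff ℝ m (pd f i) :=
  ((ContinuousLinearMap.apply ℝ ℝ (Pi.single i 1 : Fin n → ℝ)).contDiff.comp
    (hf.fderiv_right hmN) :)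

theorem ZPer.pd {n : ℕ} {f : (Fin n → ℝ) → ℝ} (hf : ZPer f) (i : Fin n) : ZPer (pd f i) := by
  intro x k
  have hshift : (fun y => f (y + fun i => (k i : ℝ))) = f := funext fun y => hf y k
  rw [_root_.pd, _root_.pd, ← fderiv_comp_add_right, hshift]

theorem ZPer.exists_abs_le {n : ℕ} {f : (Fin n → ℝ) → ℝ} (hc : Continuous f) (hf : ZPer f) :
    ∃ c, ∀ x, |f x| ≤ c := by
  obtain ⟨c, hc⟩ := (isCompact_Icc : IsCompact (cube n)).exists_bound_of_continuousOn
    hc.continuousOn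
  refine ⟨c, fun x => ?_⟩
  have hfract : f x = f fun i => Int.fract (x i) := by
    rw [← hf (fun i => Int.fract (x i)) fun i => ⌊x i⌋]
    congr 1
    ext i
    simp
  rw [hfract]
  exact hc _ ⟨fun i => Int.fract_nonneg _, fun i => (Int.fract_lt_one _).le⟩

theorem hasDerivAt_pd_line {n : ℕ} {f : (Fin n → ℝ) → ℝ} {x : Fin n → ℝ} {k : Fin n} {t : ℝ}
    (hf : DifferentiableAt ℝ f (x + t • Pi.single k 1)) :
    HasDerivAt (fun s : ℝ => f (x + s • Pi.single k 1)) (pd f k (x + t • Pi.single k 1)) t := by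
  have hline : HasDerivAt (fun s : ℝ => x + s • (Pi.single k 1 : Fin n → ℝ)) (Pi.single k 1) t := by
    simpa using ((hasDerivAt_id t).smul_const (Pi.single k 1 : Fin n → ℝ)).const_add x
  exact hf.hasFDerivAt.comp_hasDerivAt t hline

theorem hasDerivAt_dotProduct_mulVec_line {n : ℕ} {ι : Type*} [Fintype ι]
    {A : (Fin n → ℝ) → Matrix ι ι ℝ} (hA : ∀ i j, Differentiable ℝ fun y => A y i j)
    (ξ : ι → ℝ) (x : Fin n → ℝ) (k : Fin n) (t : ℝ) :
    HasDerivAt (fun s : ℝ => ξ ⬝ᵥ A (x + s • Pi.single k 1) *ᵥ ξ)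
      (ξ ⬝ᵥ pdMatrix A k (x + t • Pi.single k 1) *ᵥ ξ) t := by
  simp only [dotProduct, Matrix.mulVec, pdMatrix, Matrix.of_apply]
  exact .fun_sum fun i _ => .const_mul _ <| .fun_sum fun j _ =>
    (hasDerivAt_pd_line (hA i j _)).mul_const _

theorem abs_dotProduct_mulVec_le {ι : Type*} [Fintype ι] {M : Matrix ι ι ℝ} {c : ℝ}
    (hM : ∀ i j, |M i j| ≤ c) (ξ : ι → ℝ) :
    |ξ ⬝ᵥ M *ᵥ ξ| ≤ c * (∑ i, |ξ i|) ^ 2 := by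
  calc |ξ ⬝ᵥ M *ᵥ ξ| = |∑ j, ∑ i, ξ i * M i j * ξ j| := by rw [dot_mulVec_eq_sum_sum]
    _ ≤ ∑ j, ∑ i, |ξ i| * c * |ξ j| :=
      (abs_sum_le_sum_abs _ _).trans <| sum_le_sum fun j _ =>
        (abs_sum_le_sum_abs _ _).trans <| sum_le_sum fun i _ => by
          rw [abs_mul, abs_mul]
          gcongr
          exact hM i j
    _ = c * (∑ i, |ξ i|) ^ 2 := by
      simp_rw [sq, sum_mul_sum, mul_sum]
      rw [sum_comm]
      exact sum_congr rfl fun _ _ => sum_congr rfl fun _ _ => by ring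

theorem sq_dotProduct_pdMatrix_mulVec_le {n : ℕ} {ι : Type*} [Fintype ι]
    {A : (Fin n → ℝ) → Matrix ι ι ℝ} (hA : ∀ i j, ContDiff ℝ 2 fun x => A x i j)
    (hApsd : ∀ x, (A x).PosSemidef) {k : Fin n} {c : ℝ}
    (hc : ∀ i j x, |pdMatrix (pdMatrix A k) k x i j| ≤ c) (x : Fin n → ℝ) (ξ : ι → ℝ) :
    (ξ ⬝ᵥ pdMatrix A k x *ᵥ ξ) ^ 2 ≤ 4 * (c * (∑ i, |ξ i|) ^ 2) * (ξ ⬝ᵥ A x *ᵥ ξ) := by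
  have hA₁ : ∀ i j, Differentiable ℝ fun y => A y i j :=
    fun i j => (hA i j).differentiable (by norm_num)
  have hA₂ : ∀ i j, Differentiable ℝ fun y => pdMatrix A k y i j :=
    fun i j => ((hA i j).pd (m := 1) (by norm_num) k).differentiable (by norm_num)
  simpa using sq_deriv_le_of_nonneg_of_abs_deriv2_le
    (g := fun s => ξ ⬝ᵥ A (x + s • Pi.single k 1) *ᵥ ξ)
    (fun s => by simpa using (hApsd _).dotProduct_mulVec_nonneg ξ)
    (hasDerivAt_dotProduct_mulVec_line hA₁ ξ x k)
    (hasDerivAt_dotProduct_mulVec_line hA₂ ξ x k)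
    (fun s => abs_dotProduct_mulVec_le (fun i j => hc i j _) ξ) 0

theorem exists_forall_abs_le_of_finite {α ι : Type*} [Finite ι] {f : ι → α → ℝ}
    (hf : ∀ i, ∃ c, ∀ x, |f i x| ≤ c) : ∃ c, 0 ≤ c ∧ ∀ i x, |f i x| ≤ c := by
  choose c hc using hf
  obtain ⟨C, hC⟩ := Finite.exists_le c
  exact ⟨max C 0, le_max_right _ _, fun i x => (hc i x).trans ((hC i).trans (le_max_left _ _))⟩

theorem Matrix.IsHermitian.trace_eq_sum_dotProduct_eigenvectorBasis {ι : Type*} [Fintype ι]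
    [DecidableEq ι] {S : Matrix ι ι ℝ} (hS : S.IsHermitian) (M : Matrix ι ι ℝ) :
    M.trace = ∑ m, ⇑(hS.eigenvectorBasis m) ⬝ᵥ M *ᵥ ⇑(hS.eigenvectorBasis m) := by
  set U : Matrix ι ι ℝ := ↑hS.eigenvectorUnitary
  have hU : U * star U = 1 := Unitary.coe_mul_star_self _
  calc M.trace = (star U * M * U).trace := by
        rw [Matrix.mul_assoc, trace_mul_comm, Matrix.mul_assoc, hU, Matrix.mul_one]
    _ = _ := by
        simp only [trace, diag, mul_mul_apply, star_eq_conjTranspose,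
          conjTranspose_eq_transpose_of_trivial, U, hS.eigenvectorUnitary_transpose_apply]

theorem sq_trace_mul_le_of_sq_dotProduct_mulVec_le {ι : Type*} [Fintype ι] [DecidableEq ι]
    {A B S : Matrix ι ι ℝ} (hS : S.IsHermitian) {K : ℝ}
    (hBA : ∀ ξ : ι → ℝ, ∑ i, ξ i ^ 2 = 1 → (ξ ⬝ᵥ B *ᵥ ξ) ^ 2 ≤ K * (ξ ⬝ᵥ A *ᵥ ξ)) :
    (B * S).trace ^ 2 ≤ Fintype.card ι * K * (S * A * S).trace := by
  set u : ι → ι → ℝ := fun m => ⇑(hS.eigenvectorBasis m)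
  set lam := hS.eigenvalues
  have hSu : ∀ m, S *ᵥ u m = lam m • u m := hS.mulVec_eigenvectorBasis
  have huS : ∀ m, u m ᵥ* S = lam m • u m := fun m => by
    rw [← mulVec_transpose, ← conjTranspose_eq_transpose_of_trivial, hS.eq, hSu]
  have hunit : ∀ m, ∑ i, u m i ^ 2 = 1 := fun m => by
    rw [← EuclideanSpace.real_norm_sq_eq, (hS.eigenvectorBasis).norm_eq_one, one_pow]
  have hBS : (B * S).trace = ∑ m, lam m * (u m ⬝ᵥ B *ᵥ u m) := by
    rw [hS.trace_eq_sum_dotProduct_eigenvectorBasis]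
    refine sum_congr rfl fun m _ => ?_
    rw [← mulVec_mulVec, hSu, mulVec_smul, dotProduct_smul, smul_eq_mul]
  have hSAS : (S * A * S).trace = ∑ m, lam m ^ 2 * (u m ⬝ᵥ A *ᵥ u m) := by
    rw [hS.trace_eq_sum_dotProduct_eigenvectorBasis]
    refine sum_congr rfl fun m _ => ?_
    rw [← mulVec_mulVec, ← mulVec_mulVec, hSu, dotProduct_mulVec, huS, mulVec_smul,
      dotProduct_smul, smul_dotProduct, smul_eq_mul, smul_eq_mul]
    ring
  calc (B * S).trace ^ 2 ≤ Fintype.card ι * ∑ m, (lam m * (u m ⬝ᵥ B *ᵥ u m)) ^ 2 := by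
        rw [hBS]
        exact sq_sum_le_card_mul_sum_sq
    _ ≤ Fintype.card ι * ∑ m, K * (lam m ^ 2 * (u m ⬝ᵥ A *ᵥ u m)) := by
        gcongr with m
        rw [mul_pow, mul_left_comm]
        exact mul_le_mul_of_nonneg_left (hBA _ (hunit m)) (sq_nonneg _)
    _ = Fintype.card ι * K * (S * A * S).trace := by
        rw [hSAS, mul_assoc, ← mul_sum]

theorem stmt_2 {n : ℕ} (A : (Fin n → ℝ) → Matrix (Fin n) (Fin n) ℝ)
    (hA : ∀ i j, ContDiff ℝ 2 (fun x => A x i j))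
    (hAper : ∀ i j, ZPer (fun x => A x i j))
    (hApsd : ∀ x, (A x).PosSemidef) :
    ∃ C > 0, ∀ (x : Fin n → ℝ) (k : Fin n) (S : Matrix (Fin n) (Fin n) ℝ), S.IsSymm →
      (Matrix.trace ((Matrix.of fun i j => pd (fun y => A y i j) k x) * S)) ^ 2
        ≤ C * Matrix.trace (S * A x * S) := by
  obtain ⟨c, hc₀, hc⟩ : ∃ c, 0 ≤ c ∧ ∀ (t : Fin n × Fin n × Fin n) x,
      |pdMatrix (pdMatrix A t.2.2) t.2.2 x t.1 t.2.1| ≤ c :=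
    exists_forall_abs_le_of_finite fun ⟨i, j, k⟩ => ZPer.exists_abs_le
      (((hA i j).pd (m := 1) (by norm_num) k).pd (m := 0) (by norm_num) k).continuous
      (((hAper i j).pd k).pd k)
  refine ⟨n * (4 * (c * n)) + 1, by positivity, fun x k S hS => ?_⟩
  have hSAS : 0 ≤ (S * A x * S).trace := by
    simpa [hS.eq] using ((hApsd x).conjTranspose_mul_mul_same S).trace_nonneg
  have hunit : ∀ ξ : Fin n → ℝ, ∑ i, ξ i ^ 2 = 1 → (∑ i, |ξ i|) ^ 2 ≤ n := fun ξ hξ => by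
    simpa [sq_abs, hξ] using sq_sum_le_card_mul_sum_sq (s := univ) (f := fun i => |ξ i|)
  have key := sq_trace_mul_le_of_sq_dotProduct_mulVec_le (A := A x) (B := pdMatrix A k x)
    (K := 4 * (c * n)) (isHermitian_iff_isSymm.2 hS) fun ξ hξ =>
      (sq_dotProduct_pdMatrix_mulVec_le hA hApsd (fun i j y => hc (i, j, k) y) x ξ).trans <| by
        gcongr
        · simpa using (hApsd x).dotProduct_mulVec_nonneg ξ
        · exact hunit ξ hξ
  simp only [Fintype.card_fin] at key
  exact key.trans (by nlinarith)

end
end
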